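/- Let V be a finite-dimensional real inner product space, A symmetric positive definite, R a smoother with adjoint R†, and K := (Id − (Id − RA)(Id − R†A)) A⁻¹. If the smoothing error operator S := Id − R†A satisfies ‖Sv‖_A ≤ ‖v‖_A for all v (A-norm nonexpansiveness), then ⟨Kλ, λ⟩ ≥ 0 for all λ ∈ V, where ‖v‖²_A = ⟨Av, v⟩. -/

import Mathlib

open scoped RealInnerProductSpace

/-!
Put `v = A⁻¹ λ` and `S = Id - R†A`. Since `A` is symmetric and `R†` is the adjoint of `R`,
`⟪K λ, λ⟫ = ⟪A v, v⟫ - ⟪A (S v), S v⟫ = ‖v‖²_A - ‖S v‖²_A`, which is nonnegative exactly when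
`S` does not increase the `A`-norm of `v`.
-/

section

variable {V : Type*} [NormedAddCommGroup V] [InnerProductSpace ℝ V]

theorem inner_id_sub_comp_apply_eq_sub_inner {A R Rdag : V →ₗ[ℝ] V}
    (hAsymm : ∀ u v : V, ⟪A u, v⟫ = ⟪u, A v⟫) (hadj : ∀ u v : V, ⟪R u, v⟫ = ⟪u, Rdag v⟫)
    (v : V) :
    ⟪(LinearMap.id - (LinearMap.id - R ∘ₗ A) ∘ₗ (LinearMap.id - Rdag ∘ₗ A) : V →ₗ[ℝ] V) v, A v⟫ =
      ⟪A v, v⟫ - ⟪A ((LinearMap.id - Rdag ∘ₗ A : V →ₗ[ℝ] V) v),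
        (LinearMap.id - Rdag ∘ₗ A : V →ₗ[ℝ] V) v⟫ := by
  set S : V →ₗ[ℝ] V := LinearMap.id - Rdag ∘ₗ A
  have hSv : S v = v - Rdag (A v) := rfl
  have hR : ⟪R (A (S v)), A v⟫ = ⟪S v, A v⟫ - ⟪A (S v), S v⟫ := by
    rw [hadj, hSv, inner_sub_right, ← hSv, hAsymm (S v) v]
    ring
  have hMv : (LinearMap.id - (LinearMap.id - R ∘ₗ A) ∘ₗ S : V →ₗ[ℝ] V) v =
      v - (S v - R (A (S v))) := rfl
  rw [hMv, inner_sub_left, inner_sub_left, hR, real_inner_comm v]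
  ring

end

theorem K_nonneg_general
    {V : Type*} [NormedAddCommGroup V] [InnerProductSpace ℝ V]
    (A Ainv R Rdag : V →ₗ[ℝ] V)
    (hAsymm : ∀ u v : V, ⟪A u, v⟫ = ⟪u, A v⟫)
    (hApos : ∀ v : V, v ≠ 0 → 0 < ⟪A v, v⟫)
    (hAinv₁ : A ∘ₗ Ainv = LinearMap.id)
    (hadj : ∀ u v : V, ⟪R u, v⟫ = ⟪u, Rdag v⟫)
    (S : V →ₗ[ℝ] V) (hS : S = LinearMap.id - Rdag ∘ₗ A)
    (hScontr : ∀ v : V,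
      Real.sqrt ⟪A (S v), S v⟫ ≤ Real.sqrt ⟪A v, v⟫)
    (K : V →ₗ[ℝ] V)
    (hK : K = (LinearMap.id -
        (LinearMap.id - R ∘ₗ A) ∘ₗ (LinearMap.id - Rdag ∘ₗ A)) ∘ₗ Ainv) :
    ∀ lam : V, 0 ≤ ⟪K lam, lam⟫ := by
  intro lam
  have hA_nonneg (v : V) : 0 ≤ ⟪A v, v⟫ := by
    rcases eq_or_ne v 0 with rfl | hv
    · simp
    · exact (hApos v hv).le
  have hlam : A (Ainv lam) = lam := LinearMap.congr_fun hAinv₁ lam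
  have hKlam : K lam =
      (LinearMap.id - (LinearMap.id - R ∘ₗ A) ∘ₗ (LinearMap.id - Rdag ∘ₗ A) : V →ₗ[ℝ] V)
        (Ainv lam) := by
    rw [hK]; rfl
  generalize Ainv lam = v at hlam hKlam
  subst hlam
  rw [hKlam, inner_id_sub_comp_apply_eq_sub_inner hAsymm hadj, ← hS]
  exact sub_nonneg.2 ((Real.sqrt_le_sqrt_iff (hA_nonneg v)).1 (hScontr v))

/-- If the smoothing error operator is A-norm nonexpansive, the quadratic form of `K`
is nonnegative. -/
theorem K_nonneg
    {V : Type*} [NormedAddCommGroup V] [InnerProductSpace ℝ V] [FiniteDimensional ℝ V]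
    (A Ainv R Rdag : V →ₗ[ℝ] V)
    (hAsymm : ∀ u v : V, ⟪A u, v⟫ = ⟪u, A v⟫)
    (hApos : ∀ v : V, v ≠ 0 → 0 < ⟪A v, v⟫)
    (hAinv₁ : A ∘ₗ Ainv = LinearMap.id) (hAinv₂ : Ainv ∘ₗ A = LinearMap.id)
    (hadj : ∀ u v : V, ⟪R u, v⟫ = ⟪u, Rdag v⟫)
    (S : V →ₗ[ℝ] V) (hS : S = LinearMap.id - Rdag ∘ₗ A)
    (hScontr : ∀ v : V,
      Real.sqrt ⟪A (S v), S v⟫ ≤ Real.sqrt ⟪A v, v⟫)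
    (K : V →ₗ[ℝ] V)
    (hK : K = (LinearMap.id -
        (LinearMap.id - R ∘ₗ A) ∘ₗ (LinearMap.id - Rdag ∘ₗ A)) ∘ₗ Ainv) :
    ∀ lam : V, 0 ≤ ⟪K lam, lam⟫ :=
  K_nonneg_general A Ainv R Rdag hAsymm hApos hAinv₁ hadj S hS hScontr K hK
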